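/- Assume the non-degeneracy condition with recoverable hidden states H* = {j*} × S* and regularity, and let b ∈ ℝ^{|𝕄|} define downstream labels g(x) = 1(b^T P(M_{j*} | X_{1:T} = x) ≥ 0). Let R = {x ∈ X^T : P(X_{1:T} = x) > 0 and there exists i ∈ [T] with supp(P(H_i | X_{−i} = x_{−i})) ⊆ H*}. Then there exist attention-head parameters — a query q ∈ ℝ^{|H|+1}, position embeddings β_1, …, β_T ∈ ℝ^{|H|+1}, a key matrix Θ^{(K)} ∈ ℝ^{(|H|+1)×|X|}, value parameters Θ^{(V)} ∈ ℝ^{|𝕄||H|×|X|} and u ∈ ℝ^{|𝕄||H|} — and token embeddings e(z) ∈ ℝ^{|𝕄||H|} such that for all x ∈ R: g(x) = 1( (1/|I|) Σ_{i ∈ I} u^T ((Θ^{(V)} G_i(x)) ⊙ e(x_i)) ≥ 0 ), where G_i(x) = P(X_i | X_{−i} = x_{−i}) and I = argmax_{i ∈ [T]} { q^T (Θ^{(K)} G_i(x) + β_i) } is the set of positions achieving the maximum. -/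

import Mathlib

open scoped Classical
open Matrix

noncomputable section

/-- Forward pass for a Markov chain with transition matrix `A`. -/
def fwdVec {H : Type*} [Fintype H] (A : Matrix H H ℝ) :
    (H → ℝ) → List (H → ℝ) → (H → ℝ)
  | μ, [] => μ
  | μ, v :: vs => fwdVec A (A.mulVec fun h => μ h * v h) vs

/-- `mJointAt A μ W m x i g = P(H_i = g, X_{−i} = x_{−i} | M = m)` in a
memory-augmented HMM (hidden chain `H_1, …, H_T`, `P(H_1) = A μ`). -/
def mJointAt {𝕄 S X : Type*} {N T : ℕ} [Fintype S] [DecidableEq S]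
    (A : Matrix (Fin N × S) (Fin N × S) ℝ) (μ : Fin N × S → ℝ)
    (W : X → 𝕄 → Fin N × S → ℝ) (m : Fin N → 𝕄)
    (x : Fin T → X) (i : Fin T) (g : Fin N × S) : ℝ :=
  ∑ h, fwdVec A (A.mulVec μ)
    (List.ofFn fun k : Fin T =>
      if k = i then (fun g' => if g' = g then 1 else 0)
      else fun g' => W (x k) (m g'.1) g') h

/-- `mZ … x i = P(X_{−i} = x_{−i})`. -/
def mZ {𝕄 S X : Type*} {N T : ℕ} [Fintype 𝕄] [Fintype S] [DecidableEq S]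
    (pM : (Fin N → 𝕄) → ℝ) (A : Matrix (Fin N × S) (Fin N × S) ℝ)
    (μ : Fin N × S → ℝ) (W : X → 𝕄 → Fin N × S → ℝ)
    (x : Fin T → X) (i : Fin T) : ℝ :=
  ∑ m, pM m * ∑ g, mJointAt A μ W m x i g

/-- `mSeqPm … m x = P(X_{1:T} = x | M = m)`. -/
def mSeqPm {𝕄 S X : Type*} {N T : ℕ} [Fintype S]
    (A : Matrix (Fin N × S) (Fin N × S) ℝ) (μ : Fin N × S → ℝ)
    (W : X → 𝕄 → Fin N × S → ℝ) (m : Fin N → 𝕄) (x : Fin T → X) : ℝ :=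
  ∑ h, fwdVec A (A.mulVec μ)
    (List.ofFn fun k : Fin T => fun g' => W (x k) (m g'.1) g') h

/-- `mSeqP … x = P(X_{1:T} = x)`. -/
def mSeqP {𝕄 S X : Type*} {N T : ℕ} [Fintype 𝕄] [Fintype S]
    (pM : (Fin N → 𝕄) → ℝ) (A : Matrix (Fin N × S) (Fin N × S) ℝ)
    (μ : Fin N × S → ℝ) (W : X → 𝕄 → Fin N × S → ℝ) (x : Fin T → X) : ℝ :=
  ∑ m, pM m * mSeqPm A μ W m x

/-- `mGtok … x i z = P(X_i = z | X_{−i} = x_{−i})`, the pretrained model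
output `G_i(x)` at position `i`. -/
def mGtok {𝕄 S X : Type*} {N T : ℕ} [Fintype 𝕄] [Fintype S] [DecidableEq S]
    (pM : (Fin N → 𝕄) → ℝ) (A : Matrix (Fin N × S) (Fin N × S) ℝ)
    (μ : Fin N × S → ℝ) (W : X → 𝕄 → Fin N × S → ℝ)
    (x : Fin T → X) (i : Fin T) (z : X) : ℝ :=
  (∑ m, pM m * ∑ g, mJointAt A μ W m x i g * W z (m g.1) g) / mZ pM A μ W x i

/-- `mPostH … x i g = P(H_i = g | X_{−i} = x_{−i})`. -/
def mPostH {𝕄 S X : Type*} {N T : ℕ} [Fintype 𝕄] [Fintype S] [DecidableEq S]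
    (pM : (Fin N → 𝕄) → ℝ) (A : Matrix (Fin N × S) (Fin N × S) ℝ)
    (μ : Fin N × S → ℝ) (W : X → 𝕄 → Fin N × S → ℝ)
    (x : Fin T → X) (i : Fin T) (g : Fin N × S) : ℝ :=
  (∑ m, pM m * mJointAt A μ W m x i g) / mZ pM A μ W x i

/-- `mMemPost … x m0 = P(M_{j*} = m0 | X_{1:T} = x)`. -/
def mMemPost {𝕄 S X : Type*} {N T : ℕ} [Fintype 𝕄] [Fintype S] [DecidableEq 𝕄]
    (pM : (Fin N → 𝕄) → ℝ) (A : Matrix (Fin N × S) (Fin N × S) ℝ)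
    (μ : Fin N × S → ℝ) (W : X → 𝕄 → Fin N × S → ℝ) (jstar : Fin N)
    (x : Fin T → X) (m0 : 𝕄) : ℝ :=
  (∑ m, if m jstar = m0 then pM m * mSeqPm A μ W m x else 0) / mSeqP pM A μ W x

/-!
Non-degeneracy gives linear functionals `Φ (m, h)` on `ℝ^X`, for `h ∈ H*`, that return the
coefficient of the emission column `W_{:,(m,h)}` and vanish on every column outside `H*`.
Since `G_i(x) = ∑_{(m,h)} P(M_{h.1} = m, H_i = h | X_{−i}) W_{:,(m,h)}`, the functionals read
these posteriors off `G_i(x)`. Their total `P(H_i ∈ H* | X_{−i})` serves as attention score: it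
is at most `1`, with equality exactly where the posterior of `H_i` is supported on `H*`, so
these positions form the argmax set. At such a position, weighting `Φ (m, h) (G_i(x))` by
`b m · W(x_i | m, h)` and summing gives `P(X_{−i} = x_{−i})⁻¹ ∑_m b(m_{j*}) P(M = m) P(x | M = m)`,
a positive multiple of `bᵀ P(M_{j*} | X = x)`; averaging over the argmax keeps its sign.
-/

theorem exists_dual_eq_ite_of_linearIndepOn {ι K E : Type*} [Field K] [AddCommGroup E]
    [Module K E] {w : ι → E} {s : Set ι} (hli : LinearIndepOn K w s)
    (hdisj : Disjoint (Submodule.span K (w '' s)) (Submodule.span K (w '' sᶜ))) :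
    ∃ φ : ι → Module.Dual K E, ∀ i j, φ i (w j) = if i = j ∧ i ∈ s then 1 else 0 := by
  set V := Submodule.span K (w '' sᶜ)
  -- coordinates along `w` on `s`, taken modulo the span of the columns outside `s`
  have hπ : LinearIndependent K (V.mkQ ∘ fun i : s => w i) :=
    hli.map (by rwa [Submodule.ker_mkQ, ← Set.image_eq_range])
  choose g hg using fun k : s => LinearMap.exists_extend (Finsupp.lapply k ∘ₗ hπ.repr)
  refine ⟨fun i => if hi : i ∈ s then g ⟨i, hi⟩ ∘ₗ V.mkQ else 0, fun i j => ?_⟩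
  by_cases hi : i ∈ s
  swap
  · simp [hi]
  by_cases hj : j ∈ s
  · have hmem : V.mkQ (w j) ∈ Submodule.span K (Set.range (V.mkQ ∘ fun i : s => w i)) :=
      Submodule.subset_span ⟨⟨j, hj⟩, rfl⟩
    have hcoord := LinearMap.congr_fun (hg ⟨i, hi⟩) ⟨_, hmem⟩
    simp only [LinearMap.coe_comp, Function.comp_apply, Submodule.coe_subtype] at hcoord
    rw [hπ.repr_eq_single ⟨j, hj⟩ _ rfl] at hcoord
    simp only [dif_pos hi, LinearMap.comp_apply]
    rw [hcoord, Finsupp.lapply_apply, Finsupp.single_apply]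
    simp [hi, eq_comm]
  · have hw : V.mkQ (w j) = 0 :=
      (Submodule.Quotient.mk_eq_zero V).2 (Submodule.subset_span ⟨j, hj, rfl⟩)
    simp only [hi, dite_true, LinearMap.comp_apply, hw, map_zero]
    rw [if_neg]
    rintro ⟨rfl, -⟩
    exact hj hi

lemma List.ofFn_update {α : Type*} {T : ℕ} (F : Fin T → α) (i : Fin T) (a : α) :
    List.ofFn (Function.update F i a) = (List.ofFn F).set i a := by
  refine List.ext_getElem (by simp) fun k hk _ => ?_
  simp [List.getElem_set, Function.update_apply, Fin.ext_iff, eq_comm]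

lemma forall_apply_le_iff_eq_of_le {ι α : Type*} [PartialOrder α] {f : ι → α} {c : α}
    (hle : ∀ i, f i ≤ c) {i₀ : ι} (hi₀ : f i₀ = c) (i : ι) :
    (∀ j, f j ≤ f i) ↔ f i = c :=
  ⟨fun h => le_antisymm (hle i) (hi₀ ▸ h i₀), fun h j => h ▸ hle j⟩

lemma nonneg_div_iff_nonneg_mean_div {ι : Type*} {I : Finset ι} (hI : I.Nonempty) {c : ι → ℝ}
    (hc : ∀ i ∈ I, 0 < c i) {v P : ℝ} (hP : 0 < P) :
    0 ≤ v / P ↔ 0 ≤ (I.card : ℝ)⁻¹ * ∑ i ∈ I, v / c i := by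
  have hmean : 0 < (I.card : ℝ)⁻¹ * ∑ i ∈ I, (c i)⁻¹ :=
    mul_pos (inv_pos.2 (Nat.cast_pos.2 hI.card_pos))
      (Finset.sum_pos (fun i hi => inv_pos.2 (hc i hi)) hI)
  simp only [div_eq_mul_inv, ← Finset.mul_sum, mul_left_comm _ v]
  rw [mul_nonneg_iff_of_pos_right (inv_pos.2 hP), mul_nonneg_iff_of_pos_right hmean]

section ForwardPass

variable {H : Type*} [Fintype H] (A : Matrix H H ℝ)

lemma fwdVec_add (ν ν' : H → ℝ) (l : List (H → ℝ)) :
    fwdVec A (ν + ν') l = fwdVec A ν l + fwdVec A ν' l := by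
  induction l generalizing ν ν' with
  | nil => rfl
  | cons v vs ih =>
    simp only [fwdVec, ← ih, ← mulVec_add]
    congr 2
    funext h
    simp only [Pi.add_apply, add_mul]

lemma fwdVec_smul (c : ℝ) (ν : H → ℝ) (l : List (H → ℝ)) :
    fwdVec A (c • ν) l = c • fwdVec A ν l := by
  induction l generalizing ν with
  | nil => rfl
  | cons v vs ih =>
    simp only [fwdVec, ← ih, ← mulVec_smul]
    congr 2
    funext h
    simp only [Pi.smul_apply, smul_eq_mul, mul_assoc]

def fwdVecLinearMap (l : List (H → ℝ)) : (H → ℝ) →ₗ[ℝ] (H → ℝ) where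
  toFun ν := fwdVec A ν l
  map_add' ν ν' := fwdVec_add A ν ν' l
  map_smul' c ν := fwdVec_smul A c ν l

lemma sum_smul_fwdVec_set_single [DecidableEq H] (ν c : H → ℝ) (l : List (H → ℝ)) (n : ℕ)
    (hn : n < l.length) :
    ∑ g, c g • fwdVec A ν (l.set n (Pi.single g 1)) = fwdVec A ν (l.set n c) := by
  induction l generalizing n ν with
  | nil => exact absurd hn (Nat.not_lt_zero n)
  | cons v vs ih =>
    cases n with
    | zero =>
      have hmix : ∑ g, c g • A *ᵥ (fun h => ν h * (Pi.single g 1 : H → ℝ) h)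
          = A *ᵥ fun h => ν h * c h := by
        rw [← Finset.sum_congr rfl fun g _ => mulVec_smul A (c g) _, ← mulVec_sum]
        congr 1
        funext h
        simp [Finset.sum_apply, Pi.single_apply, mul_comm]
      simp only [List.set_cons_zero, fwdVec]
      rw [← hmix]
      change _ = fwdVecLinearMap A vs _
      simp only [map_sum, map_smul]
      rfl
    | succ n =>
      simp only [List.set_cons_succ, fwdVec]
      exact ih _ _ (Nat.lt_of_succ_lt_succ hn)

lemma sum_fwdVec_ofFn_ite_single_mul [DecidableEq H] {T : ℕ} (ν : H → ℝ) (F : Fin T → H → ℝ)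
    (i : Fin T) (h : H) :
    ∑ g, fwdVec A ν (List.ofFn fun k =>
        if k = i then (fun g' => if g' = g then 1 else 0) else F k) h * F i g
      = fwdVec A ν (List.ofFn F) h := by
  have hlist : ∀ a : H → ℝ,
      (List.ofFn fun k => if k = i then a else F k) = (List.ofFn F).set i a := fun a => by
    rw [← List.ofFn_update]
    congr 1
    funext k
    exact (Function.update_apply F i a k).symm
  have hsingle : ∀ g : H, (fun g' => if g' = g then (1 : ℝ) else 0) = Pi.single g 1 :=
    fun g => funext fun g' => by simp [Pi.single_apply]
  have hmarg := sum_smul_fwdVec_set_single A ν (F i) (List.ofFn F) i (by simp)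
  have hself : (List.ofFn F).set i (F i) = List.ofFn F := by
    rw [← List.ofFn_update, Function.update_eq_self]
  rw [hself] at hmarg
  simp only [hsingle, hlist, ← hmarg, Finset.sum_apply, Pi.smul_apply, smul_eq_mul, mul_comm]

lemma fwdVec_nonneg (hA0 : ∀ g g', 0 ≤ A g' g) (ν : H → ℝ) (hν : ∀ h, 0 ≤ ν h)
    (l : List (H → ℝ)) (hl : ∀ v ∈ l, ∀ h, 0 ≤ v h) (h : H) : 0 ≤ fwdVec A ν l h := by
  induction l generalizing ν with
  | nil => exact hν h
  | cons v vs ih =>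
    refine ih _ (fun h' => Finset.sum_nonneg fun g _ => ?_) fun v' hv' => hl v' (.tail _ hv')
    exact mul_nonneg (hA0 _ _) (mul_nonneg (hν g) (hl v (.head _) g))

end ForwardPass

section MemoryHMM

variable {𝕄 S X : Type*} {N T : ℕ} [Fintype S] [DecidableEq S] (pM : (Fin N → 𝕄) → ℝ)
  (A : Matrix (Fin N × S) (Fin N × S) ℝ) (μ : Fin N × S → ℝ) (W : X → 𝕄 → Fin N × S → ℝ)

lemma sum_mJointAt_mul_emission (m : Fin N → 𝕄) (x : Fin T → X) (i : Fin T) :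
    ∑ g, mJointAt A μ W m x i g * W (x i) (m g.1) g = mSeqPm A μ W m x := by
  simp only [mJointAt, mSeqPm, Finset.sum_mul]
  rw [Finset.sum_comm]
  exact Finset.sum_congr rfl fun h _ =>
    sum_fwdVec_ofFn_ite_single_mul A _ (fun k g' => W (x k) (m g'.1) g') i h

lemma mJointAt_nonneg (hA0 : ∀ g g', 0 ≤ A g' g) (hμ0 : ∀ g, 0 ≤ μ g)
    (hW0 : ∀ z m0 g, 0 ≤ W z m0 g) (m : Fin N → 𝕄) (x : Fin T → X) (i : Fin T)
    (g : Fin N × S) : 0 ≤ mJointAt A μ W m x i g := by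
  refine Finset.sum_nonneg fun h _ => fwdVec_nonneg A hA0 _ (fun h' => ?_) _ ?_ h
  · exact Finset.sum_nonneg fun g' _ => mul_nonneg (hA0 _ _) (hμ0 g')
  · simp only [List.mem_ofFn, forall_exists_index]
    rintro v k rfl h'
    split_ifs
    exacts [ite_nonneg zero_le_one le_rfl, hW0 _ _ _]

variable [Fintype 𝕄] (x : Fin T → X)

lemma mSeqP_le_mZ [Fintype X] (hpM0 : ∀ m, 0 ≤ pM m) (hA0 : ∀ g g', 0 ≤ A g' g)
    (hμ0 : ∀ g, 0 ≤ μ g) (hW0 : ∀ z m0 g, 0 ≤ W z m0 g) (hW1 : ∀ m0 g, ∑ z, W z m0 g = 1)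
    (i : Fin T) :
    mSeqP pM A μ W x ≤ mZ pM A μ W x i := by
  refine Finset.sum_le_sum fun m _ => mul_le_mul_of_nonneg_left ?_ (hpM0 m)
  rw [← sum_mJointAt_mul_emission]
  refine Finset.sum_le_sum fun g _ => mul_le_of_le_one_right
    (mJointAt_nonneg A μ W hA0 hμ0 hW0 m x i g) ?_
  rw [← hW1 (m g.1) g]
  exact Finset.single_le_sum (fun z _ => hW0 z _ _) (Finset.mem_univ (x i))

/-- `mMemStatePost … x i (m0, g) = P(M_{g.1} = m0, H_i = g | X_{−i} = x_{−i})`. -/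
def mMemStatePost (i : Fin T) (p : 𝕄 × (Fin N × S)) : ℝ :=
  (∑ m, if m p.2.1 = p.1 then pM m * mJointAt A μ W m x i p.2 else 0) / mZ pM A μ W x i

lemma sum_mMemStatePost_mul (i : Fin T) (F : 𝕄 × (Fin N × S) → ℝ) :
    ∑ p, mMemStatePost pM A μ W x i p * F p
      = (∑ m, pM m * ∑ g, mJointAt A μ W m x i g * F (m g.1, g)) / mZ pM A μ W x i := by
  simp only [mMemStatePost, div_mul_eq_mul_div, ← Finset.sum_div, Finset.sum_mul, ite_mul,
    zero_mul]
  rw [Fintype.sum_prod_type]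
  congr 1
  rw [Finset.sum_comm]
  simp_rw [Finset.sum_comm (γ := 𝕄) (α := Fin N → 𝕄), Finset.sum_ite_eq, Finset.mem_univ,
    if_true, Finset.mul_sum, mul_assoc]
  exact Finset.sum_comm

lemma mGtok_eq_sum_smul (i : Fin T) :
    mGtok pM A μ W x i = ∑ p, mMemStatePost pM A μ W x i p • fun z => W z p.1 p.2 := by
  funext z
  simp only [Finset.sum_apply, Pi.smul_apply, smul_eq_mul, sum_mMemStatePost_mul]
  rfl

lemma sum_mMemStatePost_fst (i : Fin T) (g : Fin N × S) :
    ∑ m0, mMemStatePost pM A μ W x i (m0, g) = mPostH pM A μ W x i g := by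
  simp only [mMemStatePost, mPostH, ← Finset.sum_div]
  rw [Finset.sum_comm]
  simp

lemma sum_mPostH {i : Fin T} (hZ : mZ pM A μ W x i ≠ 0) : ∑ g, mPostH pM A μ W x i g = 1 := by
  simp only [mPostH, ← Finset.sum_div]
  rw [Finset.sum_comm, div_eq_one_iff_eq hZ]
  simp [mZ, Finset.mul_sum]

end MemoryHMM

section AttentionHead

variable {𝕄 S X : Type*} {N T : ℕ} [Fintype 𝕄] [Fintype S] [DecidableEq S]
  {pM : (Fin N → 𝕄) → ℝ} {A : Matrix (Fin N × S) (Fin N × S) ℝ} {μ : Fin N × S → ℝ}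
  {W : X → 𝕄 → Fin N × S → ℝ} {x : Fin T → X} {i : Fin T}

lemma pM_mul_mJointAt_eq_zero_of_mPostH_eq_zero
    (hρ : ∀ m g, 0 ≤ pM m * mJointAt A μ W m x i g) (hZ : mZ pM A μ W x i ≠ 0)
    {g : Fin N × S} (hg : mPostH pM A μ W x i g = 0) (m : Fin N → 𝕄) :
    pM m * mJointAt A μ W m x i g = 0 := by
  rw [mPostH, div_eq_zero_iff, or_iff_left hZ,
    Finset.sum_eq_zero_iff_of_nonneg fun m _ => hρ m g] at hg
  exact hg m (Finset.mem_univ m)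

lemma sum_ite_mem_mPostH_eq_one_sub (hZ : mZ pM A μ W x i ≠ 0) (Hs : Set (Fin N × S)) :
    ∑ g, (if g ∈ Hs then mPostH pM A μ W x i g else 0)
      = 1 - ∑ g, (if g ∈ Hs then 0 else mPostH pM A μ W x i g) := by
  rw [eq_sub_iff_add_eq, ← Finset.sum_add_distrib, ← sum_mPostH pM A μ W x hZ]
  refine Finset.sum_congr rfl fun g _ => ?_
  split_ifs <;> simp

lemma mPostH_nonneg (hρ : ∀ m g, 0 ≤ pM m * mJointAt A μ W m x i g)
    (hZ : 0 < mZ pM A μ W x i) (g : Fin N × S) : 0 ≤ mPostH pM A μ W x i g :=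
  div_nonneg (Finset.sum_nonneg fun m _ => hρ m g) hZ.le

lemma sum_ite_mem_mPostH_le_one (hρ : ∀ m g, 0 ≤ pM m * mJointAt A μ W m x i g)
    (hZ : 0 < mZ pM A μ W x i) (Hs : Set (Fin N × S)) :
    ∑ g, (if g ∈ Hs then mPostH pM A μ W x i g else 0) ≤ 1 := by
  rw [sum_ite_mem_mPostH_eq_one_sub hZ.ne']
  refine sub_le_self _ (Finset.sum_nonneg fun g _ => ?_)
  split_ifs
  exacts [le_rfl, mPostH_nonneg hρ hZ g]

lemma sum_ite_mem_mPostH_eq_one_iff (hρ : ∀ m g, 0 ≤ pM m * mJointAt A μ W m x i g)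
    (hZ : 0 < mZ pM A μ W x i) (Hs : Set (Fin N × S)) :
    ∑ g, (if g ∈ Hs then mPostH pM A μ W x i g else 0) = 1
      ↔ ∀ g ∉ Hs, mPostH pM A μ W x i g = 0 := by
  rw [sum_ite_mem_mPostH_eq_one_sub hZ.ne', sub_eq_self,
    Finset.sum_eq_zero_iff_of_nonneg fun g _ => ?_]
  · simp
  · split_ifs
    exacts [le_rfl, mPostH_nonneg hρ hZ g]

variable {Hs : Set (Fin N × S)} {Φ : 𝕄 × (Fin N × S) → Module.Dual ℝ (X → ℝ)}

lemma dual_apply_mGtok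
    (hΦ : ∀ p q, Φ p (fun z => W z q.1 q.2) = if p = q ∧ p.2 ∈ Hs then 1 else 0)
    (p : 𝕄 × (Fin N × S)) :
    Φ p (mGtok pM A μ W x i) = if p.2 ∈ Hs then mMemStatePost pM A μ W x i p else 0 := by
  simp only [mGtok_eq_sum_smul, map_sum, map_smul, hΦ, smul_eq_mul, mul_ite, mul_one, mul_zero]
  split_ifs with hp <;> simp [hp]

lemma sum_dual_apply_mGtok
    (hΦ : ∀ p q, Φ p (fun z => W z q.1 q.2) = if p = q ∧ p.2 ∈ Hs then 1 else 0) :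
    ∑ p, Φ p (mGtok pM A μ W x i) = ∑ g, if g ∈ Hs then mPostH pM A μ W x i g else 0 := by
  simp only [dual_apply_mGtok hΦ]
  rw [Fintype.sum_prod_type_right]
  refine Finset.sum_congr rfl fun g _ => ?_
  split_ifs <;> simp [sum_mMemStatePost_fst]

lemma sum_mul_dual_apply_mGtok_mul_emission
    (hΦ : ∀ p q, Φ p (fun z => W z q.1 q.2) = if p = q ∧ p.2 ∈ Hs then 1 else 0)
    (hρ : ∀ m g, 0 ≤ pM m * mJointAt A μ W m x i g) (hZ : mZ pM A μ W x i ≠ 0)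
    {jstar : Fin N} (hHs : ∀ g ∈ Hs, g.1 = jstar)
    (hsupp : ∀ g ∉ Hs, mPostH pM A μ W x i g = 0) (b : 𝕄 → ℝ) :
    ∑ p, b p.1 * (Φ p (mGtok pM A μ W x i) * W (x i) p.1 p.2)
      = (∑ m, b (m jstar) * (pM m * mSeqPm A μ W m x)) / mZ pM A μ W x i := by
  have hrw : ∀ p, b p.1 * (Φ p (mGtok pM A μ W x i) * W (x i) p.1 p.2)
      = mMemStatePost pM A μ W x i p * if p.2 ∈ Hs then b p.1 * W (x i) p.1 p.2 else 0 :=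
    fun p => by rw [dual_apply_mGtok hΦ]; split_ifs <;> ring
  simp only [hrw, sum_mMemStatePost_mul]
  congr 1
  refine Finset.sum_congr rfl fun m _ => ?_
  rw [← sum_mJointAt_mul_emission A μ W m x i, Finset.mul_sum, Finset.mul_sum, Finset.mul_sum]
  refine Finset.sum_congr rfl fun g _ => ?_
  by_cases hg : g ∈ Hs
  · rw [if_pos hg, hHs g hg]
    ring
  · rw [if_neg hg]
    linear_combination (-(b (m jstar) * W (x i) (m g.1) g)) *
      pM_mul_mJointAt_eq_zero_of_mPostH_eq_zero hρ hZ (hsupp g hg) m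

end AttentionHead

lemma sum_mul_mMemPost {𝕄 S X : Type*} {N T : ℕ} [Fintype 𝕄] [Fintype S] [DecidableEq 𝕄]
    (pM : (Fin N → 𝕄) → ℝ) (A : Matrix (Fin N × S) (Fin N × S) ℝ) (μ : Fin N × S → ℝ)
    (W : X → 𝕄 → Fin N × S → ℝ) (jstar : Fin N) (x : Fin T → X) (b : 𝕄 → ℝ) :
    ∑ m0, b m0 * mMemPost pM A μ W jstar x m0
      = (∑ m, b (m jstar) * (pM m * mSeqPm A μ W m x)) / mSeqP pM A μ W x := by
  simp only [mMemPost, mul_div_assoc', ← Finset.sum_div, Finset.mul_sum, mul_ite, mul_zero]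
  rw [Finset.sum_comm]
  simp

def recoverableStates {S : Type*} {N : ℕ} (jstar : Fin N) (Sstar : Finset S) :
    Set (Fin N × S) :=
  {jstar} ×ˢ (Sstar : Set S)

lemma exists_dual_emission {𝕄 S X : Type*} {N : ℕ} [DecidableEq S]
    (W : X → 𝕄 → Fin N × S → ℝ) (jstar : Fin N) (Sstar : Finset S)
    (hli : LinearIndependent ℝ
      (fun p : 𝕄 × {s : S // s ∈ Sstar} => fun z : X => W z p.1 (jstar, p.2.1)))
    (hspan : Submodule.span ℝ
        {f : X → ℝ | ∃ m0 : 𝕄, ∃ s : S, s ∈ Sstar ∧ f = fun z => W z m0 (jstar, s)}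
      ⊓ Submodule.span ℝ
        {f : X → ℝ | ∃ m0 : 𝕄, ∃ g : Fin N × S,
          ¬(g.1 = jstar ∧ g.2 ∈ Sstar) ∧ f = fun z => W z m0 g}
      = ⊥) :
    ∃ Φ : 𝕄 × (Fin N × S) → Module.Dual ℝ (X → ℝ), ∀ p q, Φ p (fun z => W z q.1 q.2)
      = if p = q ∧ p.2 ∈ recoverableStates jstar Sstar then 1 else 0 := by
  set s : Set (𝕄 × (Fin N × S)) := {p | p.2 ∈ recoverableStates jstar Sstar}
  set e : 𝕄 × {s : S // s ∈ Sstar} → 𝕄 × (Fin N × S) := fun p => (p.1, (jstar, p.2))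
  have he : Function.Injective e := by
    rintro ⟨m, s, hs⟩ ⟨m', s', hs'⟩ h
    simp_all [e]
  have hrange : Set.range e = s := by
    ext ⟨m, j, t⟩
    simp [e, s, recoverableStates, eq_comm]
  have hli' : LinearIndepOn ℝ (fun q z => W z q.1 q.2) s :=
    hrange ▸ (linearIndepOn_range_iff he _).2 hli
  obtain ⟨Φ, hΦ⟩ := exists_dual_eq_ite_of_linearIndepOn hli' (by
    rw [disjoint_iff, ← hspan]
    congr 2 <;> ext f <;> simp [s, recoverableStates, eq_comm])
  exact ⟨Φ, fun p q => by convert hΦ p q using 3; exact Iff.rfl⟩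

theorem stmt10_general {𝕄 S X : Type*} {N : ℕ}
    [Fintype 𝕄] [Fintype S] [Fintype X] [DecidableEq 𝕄] [DecidableEq S]
    (pM : (Fin N → 𝕄) → ℝ) (μ : Fin N × S → ℝ)
    (A : Matrix (Fin N × S) (Fin N × S) ℝ) (W : X → 𝕄 → Fin N × S → ℝ)
    (hpM0 : ∀ m, 0 ≤ pM m)
    (hμ0 : ∀ g, 0 ≤ μ g)
    (hA0 : ∀ g g', 0 ≤ A g' g)
    (hW0 : ∀ z m0 g, 0 ≤ W z m0 g) (hW1 : ∀ m0 g, ∑ z, W z m0 g = 1)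
    -- non-degeneracy with recoverable hidden states `H* = {j*} × S*`
    (jstar : Fin N) (Sstar : Finset S)
    (hli : LinearIndependent ℝ
      (fun p : 𝕄 × {s : S // s ∈ Sstar} => fun z : X => W z p.1 (jstar, p.2.1)))
    (hspan : Submodule.span ℝ
        {f : X → ℝ | ∃ m0 : 𝕄, ∃ s : S, s ∈ Sstar ∧ f = fun z => W z m0 (jstar, s)}
      ⊓ Submodule.span ℝ
        {f : X → ℝ | ∃ m0 : 𝕄, ∃ g : Fin N × S,
          ¬(g.1 = jstar ∧ g.2 ∈ Sstar) ∧ f = fun z => W z m0 g}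
      = ⊥)
    (T : ℕ) (b : 𝕄 → ℝ) :
    ∃ (q : Option (Fin N × S) → ℝ) (β : Fin T → Option (Fin N × S) → ℝ)
      (ΘK : Matrix (Option (Fin N × S)) X ℝ)
      (ΘV : Matrix (𝕄 × (Fin N × S)) X ℝ) (u : 𝕄 × (Fin N × S) → ℝ)
      (e : X → 𝕄 × (Fin N × S) → ℝ),
      ∀ x : Fin T → X,
        -- `x ∈ R`
        0 < mSeqP pM A μ W x →
        (∃ i : Fin T, ∀ g : Fin N × S,
          ¬(g.1 = jstar ∧ g.2 ∈ Sstar) → mPostH pM A μ W x i g = 0) →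
        -- `g(x)` agrees with the sign of the attention-head output
        (0 ≤ ∑ m0, b m0 * mMemPost pM A μ W jstar x m0
          ↔ 0 ≤
            ((Finset.univ.filter fun i : Fin T => ∀ i' : Fin T,
                q ⬝ᵥ (ΘK.mulVec (mGtok pM A μ W x i') + β i')
                  ≤ q ⬝ᵥ (ΘK.mulVec (mGtok pM A μ W x i) + β i)).card : ℝ)⁻¹ *
              ∑ i ∈ Finset.univ.filter (fun i : Fin T => ∀ i' : Fin T,
                  q ⬝ᵥ (ΘK.mulVec (mGtok pM A μ W x i') + β i')
                    ≤ q ⬝ᵥ (ΘK.mulVec (mGtok pM A μ W x i) + β i)),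
                ∑ p : 𝕄 × (Fin N × S), u p *
                  ((ΘV.mulVec (mGtok pM A μ W x i)) p * e (x i) p)) := by
  obtain ⟨Φ, hΦ⟩ := exists_dual_emission W jstar Sstar hli hspan
  -- every row of the key is the score functional `∑ p, Φ p`; the query reads the `none` row
  refine ⟨Pi.single none 1, 0, LinearMap.toMatrix' (LinearMap.pi fun _ => ∑ p, Φ p),
    LinearMap.toMatrix' (LinearMap.pi Φ), fun p => b p.1, fun z p => W z p.1 p.2,
    fun x hP ⟨i₀, hi₀⟩ => ?_⟩
  have hZ i : 0 < mZ pM A μ W x i := hP.trans_le (mSeqP_le_mZ pM A μ W x hpM0 hA0 hμ0 hW0 hW1 i)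
  have hρ i m g : 0 ≤ pM m * mJointAt A μ W m x i g :=
    mul_nonneg (hpM0 m) (mJointAt_nonneg A μ W hA0 hμ0 hW0 m x i g)
  have hscore i : Pi.single none 1 ⬝ᵥ
      (LinearMap.toMatrix' (LinearMap.pi fun _ => ∑ p, Φ p) *ᵥ mGtok pM A μ W x i
        + (0 : Fin T → Option (Fin N × S) → ℝ) i)
      = ∑ g, if g ∈ recoverableStates jstar Sstar then mPostH pM A μ W x i g else 0 := by
    rw [Pi.zero_apply, add_zero, single_dotProduct, one_mul, LinearMap.toMatrix'_mulVec,
      LinearMap.pi_apply, LinearMap.sum_apply, sum_dual_apply_mGtok hΦ]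
  have hi₀_max := (sum_ite_mem_mPostH_eq_one_iff (hρ i₀) (hZ i₀) (recoverableStates jstar Sstar)).2 hi₀
  simp only [hscore]
  simp only [forall_apply_le_iff_eq_of_le (fun i => sum_ite_mem_mPostH_le_one (hρ i) (hZ i) _) hi₀_max,
    sum_ite_mem_mPostH_eq_one_iff (hρ _) (hZ _), LinearMap.toMatrix'_mulVec, LinearMap.pi_apply]
  rw [sum_mul_mMemPost, Finset.sum_congr rfl fun i hi => sum_mul_dual_apply_mGtok_mul_emission hΦ
    (hρ i) (hZ i).ne' (fun g hg => hg.1) (Finset.mem_filter.1 hi).2 b]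
  exact nonneg_div_iff_nonneg_mean_div ⟨i₀, Finset.mem_filter.2 ⟨Finset.mem_univ _, hi₀⟩⟩
    (fun i _ => hZ i) hP

theorem stmt10 {𝕄 S X : Type*} {N : ℕ}
    [Fintype 𝕄] [Fintype S] [Fintype X] [DecidableEq 𝕄] [DecidableEq S]
    (pM : (Fin N → 𝕄) → ℝ) (μ : Fin N × S → ℝ)
    (A : Matrix (Fin N × S) (Fin N × S) ℝ) (W : X → 𝕄 → Fin N × S → ℝ)
    (hpM0 : ∀ m, 0 ≤ pM m) (hpM1 : ∑ m, pM m = 1)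
    (hμ0 : ∀ g, 0 ≤ μ g) (hμ1 : ∑ g, μ g = 1)
    (hA0 : ∀ g g', 0 ≤ A g' g) (hA1 : ∀ g, ∑ g', A g' g = 1)
    (hW0 : ∀ z m0 g, 0 ≤ W z m0 g) (hW1 : ∀ m0 g, ∑ z, W z m0 g = 1)
    -- non-degeneracy with recoverable hidden states `H* = {j*} × S*`
    (jstar : Fin N) (Sstar : Finset S)
    (hli : LinearIndependent ℝ
      (fun p : 𝕄 × {s : S // s ∈ Sstar} => fun z : X => W z p.1 (jstar, p.2.1)))
    (hspan : Submodule.span ℝ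
        {f : X → ℝ | ∃ m0 : 𝕄, ∃ s : S, s ∈ Sstar ∧ f = fun z => W z m0 (jstar, s)}
      ⊓ Submodule.span ℝ
        {f : X → ℝ | ∃ m0 : 𝕄, ∃ g : Fin N × S,
          ¬(g.1 = jstar ∧ g.2 ∈ Sstar) ∧ f = fun z => W z m0 g}
      = ⊥)
    -- regularity
    (hErg : ∃ n₀ : ℕ, ∀ n ≥ n₀, ∀ g g' : Fin N × S, 0 < (A ^ n) g' g)
    (hfull : ∀ g, 0 < μ g)
    (T : ℕ) (b : 𝕄 → ℝ) :
    ∃ (q : Option (Fin N × S) → ℝ) (β : Fin T → Option (Fin N × S) → ℝ)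
      (ΘK : Matrix (Option (Fin N × S)) X ℝ)
      (ΘV : Matrix (𝕄 × (Fin N × S)) X ℝ) (u : 𝕄 × (Fin N × S) → ℝ)
      (e : X → 𝕄 × (Fin N × S) → ℝ),
      ∀ x : Fin T → X,
        -- `x ∈ R`
        0 < mSeqP pM A μ W x →
        (∃ i : Fin T, ∀ g : Fin N × S,
          ¬(g.1 = jstar ∧ g.2 ∈ Sstar) → mPostH pM A μ W x i g = 0) →
        -- `g(x)` agrees with the sign of the attention-head output
        (0 ≤ ∑ m0, b m0 * mMemPost pM A μ W jstar x m0
          ↔ 0 ≤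
            ((Finset.univ.filter fun i : Fin T => ∀ i' : Fin T,
                q ⬝ᵥ (ΘK.mulVec (mGtok pM A μ W x i') + β i')
                  ≤ q ⬝ᵥ (ΘK.mulVec (mGtok pM A μ W x i) + β i)).card : ℝ)⁻¹ *
              ∑ i ∈ Finset.univ.filter (fun i : Fin T => ∀ i' : Fin T,
                  q ⬝ᵥ (ΘK.mulVec (mGtok pM A μ W x i') + β i')
                    ≤ q ⬝ᵥ (ΘK.mulVec (mGtok pM A μ W x i) + β i)),
                ∑ p : 𝕄 × (Fin N × S), u p *
                  ((ΘV.mulVec (mGtok pM A μ W x i)) p * e (x i) p)) :=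
  stmt10_general pM μ A W hpM0 hμ0 hA0 hW0 hW1 jstar Sstar hli hspan T b

end
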